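/- Orbit condition from universal factorization (abstract form of Lemma 3.3): Let G and H be groups, p : G → H a surjective group homomorphism with kernel K, M a G-set, Q an H-set, and π : M → Q a surjective p-equivariant map. Assume that for every H-set N (regarded as a G-set via p) and every G-equivariant map f : M → N there exists an H-equivariant map g : Q → N with f = g ∘ π. Then any two points x, y ∈ M with π(x) = π(y) lie in the same K-orbit, i.e., there exists k ∈ K with k • x = y; hence every fiber of π is a single K-orbit. -/
import Mathlib


universe u

/-- Orbit condition from universal factorization (abstract Lemma 3.3): if every
`G`-equivariant map out of `M` factors through the surjective `p`-equivariant map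
`π : M → Q` via an `H`-equivariant map, then points of `M` with the same image
under `π` lie in the same `K`-orbit (`K = ker p`); hence every fiber of `π` is a
single `K`-orbit. -/
theorem orbit_condition_of_factorization
    {G H : Type*} {M : Type u} {Q : Type*} [Group G] [Group H]
    [MulAction G M] [MulAction H Q]
    (p : G →* H) (hp : Function.Surjective p)
    (π : M → Q) (hπsurj : Function.Surjective π)
    (hπequiv : ∀ (g : G) (x : M), π (g • x) = p g • π x)
    (hfact : ∀ (N : Type u) [MulAction H N] (f : M → N),
      (∀ (g : G) (x : M), f (g • x) = p g • f x) →
      ∃ φ : Q → N, (∀ (h : H) (q : Q), φ (h • q) = h • φ q) ∧ f = φ ∘ π) :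
    (∀ x y : M, π x = π y → ∃ k ∈ p.ker, k • x = y) ∧
      (∀ q : Q, ∃ x : M, π ⁻¹' {q} = {y | ∃ k ∈ p.ker, k • x = y}) := by
  classical
  set K := p.ker with hK
  let s : H → G := Function.surjInv hp
  have hs : ∀ h, p (s h) = h := Function.surjInv_eq hp
  let N := Quotient (MulAction.orbitRel K M)
  -- key: if p g = p g' then ⟦g • x⟧ = ⟦g' • x⟧
  have key : ∀ (g g' : G) (x : M), p g = p g' → (⟦g • x⟧ : N) = ⟦g' • x⟧ := by
    intro g g' x hgg'
    apply Quotient.sound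
    refine ⟨⟨g * g'⁻¹, ?_⟩, ?_⟩
    · exact MonoidHom.mem_ker.mpr (by simp [hgg'])
    · show (g * g'⁻¹) • (g' • x) = g • x
      rw [← mul_smul]
      simp
  letI : SMul H N := ⟨fun h => Quotient.map' (fun x => s h • x) (by
    rintro a b ⟨k, rfl⟩
    refine ⟨⟨s h * k * (s h)⁻¹, ?_⟩, ?_⟩
    · exact MonoidHom.mem_ker.mpr (by simp [hs, MonoidHom.mem_ker.mp k.2])
    · show (s h * (k : G) * (s h)⁻¹) • (s h • b) = s h • (k : G) • b
      simp [← mul_smul, mul_assoc])⟩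
  have smul_mk : ∀ (h : H) (x : M), (h • (⟦x⟧ : N)) = ⟦s h • x⟧ := fun _ _ => rfl
  letI : MulAction H N := {
    one_smul := by
      rintro ⟨x⟩
      show (⟦s 1 • x⟧ : N) = ⟦x⟧
      have := key (s 1) 1 x (by simp [hs])
      simpa using this
    mul_smul := by
      rintro h₁ h₂ ⟨x⟩
      show (⟦s (h₁ * h₂) • x⟧ : N) = ⟦s h₁ • s h₂ • x⟧
      rw [← mul_smul]
      exact key _ _ x (by simp [hs]) }
  have hfequiv : ∀ (g : G) (x : M), (⟦g • x⟧ : N) = p g • (⟦x⟧ : N) := by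
    intro g x
    rw [smul_mk]
    exact key g (s (p g)) x (by rw [hs])
  obtain ⟨φ, hφequiv, hφ⟩ := hfact N (fun x => (⟦x⟧ : N)) hfequiv
  have main : ∀ x y : M, π x = π y → ∃ k ∈ p.ker, k • x = y := by
    intro x y hxy
    have : (⟦x⟧ : N) = ⟦y⟧ := by
      have hx := congrFun hφ x
      have hy := congrFun hφ y
      simp only [Function.comp_apply] at hx hy
      rw [hx, hy, hxy]
    obtain ⟨k, hk⟩ := Quotient.exact this
    have hk' : (k : G) • y = x := hk
    exact ⟨(k : G)⁻¹, inv_mem k.2, by rw [← hk', ← mul_smul]; simp⟩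
  refine ⟨main, fun q => ?_⟩
  obtain ⟨x, rfl⟩ := hπsurj q
  refine ⟨x, Set.ext fun y => ?_⟩
  constructor
  · intro hy
    exact main x y hy.symm
  · rintro ⟨k, hk, rfl⟩
    show π (k • x) = π x
    rw [hπequiv, MonoidHom.mem_ker.mp hk, one_smul]
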